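/- For every ε > 0, the set {m ∈ ℤ⁺ : for all natural numbers k with 0 ≤ k ≤ log₂ m, (√3/2)^k · m^(1−ε) ≤ T^k(m) ≤ (√3/2)^k · m^(1+ε)} is *-dense. -/

import Mathlib

/-- The accelerated Collatz map `T(m) = m/2` if `m` even, `(3m+1)/2` if `m` odd. -/
def T (m : ℕ) : ℕ := if m % 2 = 0 then m / 2 else (3 * m + 1) / 2

/-- The parity sequence of `m`: `p(m)_k = T^[k] m mod 2`. -/
def parity (m k : ℕ) : ℕ := T^[k] m % 2

open scoped Classical in
/-- Number of elements of `A` in `{1, …, n}`. -/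
noncomputable def countIn (A : Set ℕ) (n : ℕ) : ℕ :=
  ((Finset.Icc 1 n).filter (fun m => m ∈ A)).card

/-- `S` has `(C,D)`-density: `#(S ∩ [1,N])/N ≥ 1 - C/N^D` for every positive `N`. -/
def hasCDdensity (S : Set ℕ) (C D : ℝ) : Prop :=
  ∀ N : ℕ, 0 < N → 1 - C / (N : ℝ) ^ D ≤ (countIn S N : ℝ) / N

/-- `S` has `D`-density: it has `(C,D)`-density for some `C > 0`. -/
def hasDdensity (S : Set ℕ) (D : ℝ) : Prop := ∃ C > 0, hasCDdensity S C D

/-- `S` is `*`-dense: it has `D`-density for some `0 < D ≤ 1`. -/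
def starDense (S : Set ℕ) : Prop := ∃ D, 0 < D ∧ D ≤ 1 ∧ hasDdensity S D

/-!
Let `a_k` be the number of odd terms among `m, T m, …, T^[k-1] m`. Since
`2 T x = 3^(x mod 2) x + (x mod 2)`, induction gives
`3^(a_k) m ≤ 2^k T^[k] m ≤ 3^(a_k) (m + 2^k)`, so for `2^k ≤ m` the iterate `T^[k] m` is
`(√3/2)^k m · √3^(2 a_k - k)` up to a factor `2`. Hence `m ∈ [2^n, 2^(n+1))` has the required
property as soon as `|2 a_k - k| ≤ δ n - 1` for all `k ≤ n`, where `δ = min ε 1`.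

The first `n` parities of `m` determine `m mod 2^n`, hence determine `m` inside `[2^n, 2^(n+1))`.
The exceptional `m` in that block are therefore at most as many as the sign vectors of length `n`
with some prefix sum of absolute value `> δ n - 1`, and Hoeffding's inequality bounds these by
`O(μ^n)` with `μ = 2 e^(-δ²/4) < 2`. Summing over the dyadic blocks below `N` leaves
`O(N^(log₂ μ))` exceptions.
-/

open Finset Real

lemma two_mul_T (x : ℕ) : 2 * T x = 3 ^ (x % 2) * x + x % 2 := by
  unfold T
  rcases Nat.mod_two_eq_zero_or_one x with h | h <;> simp [h] <;> omega

lemma parity_lt_two (m k : ℕ) : parity m k < 2 := Nat.mod_lt _ two_pos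

lemma parity_succ (m k : ℕ) : parity m (k + 1) = parity (T m) k := by
  simp only [parity, Function.iterate_succ_apply]

lemma two_pow_mul_iterate_succ (m k : ℕ) :
    2 ^ (k + 1) * T^[k + 1] m = 2 ^ k * (3 ^ parity m k * T^[k] m + parity m k) := by
  rw [Function.iterate_succ_apply', pow_succ, mul_assoc, two_mul_T]
  rfl

def oddCount (m k : ℕ) : ℕ := ∑ j ∈ range k, parity m j

lemma oddCount_succ (m k : ℕ) : oddCount m (k + 1) = oddCount m k + parity m k :=
  sum_range_succ _ _

lemma three_pow_oddCount_mul_le (m k : ℕ) : 3 ^ oddCount m k * m ≤ 2 ^ k * T^[k] m := by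
  induction k with
  | zero => simp [oddCount]
  | succ k ih =>
    rw [oddCount_succ, two_pow_mul_iterate_succ]
    calc 3 ^ (oddCount m k + parity m k) * m
        = 3 ^ parity m k * (3 ^ oddCount m k * m) := by ring
      _ ≤ 3 ^ parity m k * (2 ^ k * T^[k] m) := Nat.mul_le_mul_left _ ih
      _ ≤ _ := by nlinarith [Nat.zero_le (2 ^ k * parity m k)]

lemma two_pow_mul_iterate_add_two_pow_le (m k : ℕ) :
    2 ^ k * T^[k] m + 2 ^ k ≤ 3 ^ oddCount m k * (m + 2 ^ k) := by
  induction k with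
  | zero => simp [oddCount]
  | succ k ih =>
    rw [oddCount_succ, two_pow_mul_iterate_succ]
    have h3 : 2 ^ k ≤ 3 ^ oddCount m k * 2 ^ k :=
      Nat.le_mul_of_pos_left _ (by positivity)
    obtain hp | hp : parity m k = 0 ∨ parity m k = 1 := by have := parity_lt_two m k; omega
    all_goals simp only [hp, pow_succ, pow_zero, pow_add]; nlinarith [Nat.zero_le (2 ^ k)]

lemma modEq_of_parity_eq {n m m' : ℕ} (h : ∀ j < n, parity m j = parity m' j) :
    m ≡ m' [MOD 2 ^ n] := by
  induction n generalizing m m' with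
  | zero => exact Nat.modEq_one
  | succ n ih =>
    have hp : m % 2 = m' % 2 := h 0 n.succ_pos
    have hT : T m ≡ T m' [MOD 2 ^ n] :=
      ih fun j hj => by simpa only [parity_succ] using h (j + 1) (by omega)
    have h2T := hT.mul_left' 2
    rw [two_mul_T, two_mul_T, ← hp, ← pow_succ'] at h2T
    exact (h2T.add_right_cancel' _).cancel_left_of_coprime
      (Nat.Coprime.pow _ _ (by norm_num))

lemma card_lt_abs_mul_exp_le {α : Type*} [Fintype α] (f : α → ℝ) {s : ℝ} (hs : 0 ≤ s)
    (t : ℝ) :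
    (#{x | t < |f x|} : ℝ) * exp (s * t) ≤ ∑ x, (exp (s * f x) + exp (-(s * f x))) := by
  rw [← nsmul_eq_mul, ← sum_const]
  refine (sum_le_sum fun x hx => ?_).trans
    (sum_le_sum_of_subset_of_nonneg (filter_subset _ _) fun _ _ _ => by positivity)
  have hst : s * t ≤ s * |f x| := mul_le_mul_of_nonneg_left (mem_filter.1 hx).2.le hs
  rcases abs_cases (f x) with ⟨h, -⟩ | ⟨h, -⟩ <;> rw [h] at hst
  · linarith [exp_le_exp.2 hst, exp_pos (-(s * f x))]
  · linarith [exp_le_exp.2 (hst.trans_eq (mul_neg s (f x))), exp_pos (s * f x)]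

section Rademacher

variable {ι : Type*} [Fintype ι]

def rademacherSum (c : ι → ℝ) (v : ι → Bool) : ℝ := ∑ i, if v i then c i else -c i

lemma rademacherSum_const_mul (s : ℝ) (c : ι → ℝ) (v : ι → Bool) :
    rademacherSum (fun i => s * c i) v = s * rademacherSum c v := by
  simp only [rademacherSum, mul_sum]
  exact sum_congr rfl fun i _ => by split_ifs <;> ring

variable [DecidableEq ι]

lemma sum_exp_rademacherSum (c : ι → ℝ) :
    ∑ v : ι → Bool, exp (rademacherSum c v) = ∏ i, 2 * cosh (c i) := by
  simp only [rademacherSum, exp_sum]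
  rw [← Fintype.prod_sum fun i (b : Bool) => exp (if b then c i else -c i)]
  exact prod_congr rfl fun i _ => by simp [cosh_eq]; ring

lemma sum_exp_rademacherSum_le (c : ι → ℝ) :
    ∑ v : ι → Bool, exp (rademacherSum c v) ≤ ∏ i, 2 * exp (c i ^ 2 / 2) := by
  rw [sum_exp_rademacherSum]
  exact prod_le_prod (fun i _ => by positivity) fun i _ => by gcongr; exact cosh_le_exp_half_sq _

lemma card_lt_abs_rademacherSum_le (c : ι → ℝ) (hc : ∀ i, |c i| ≤ 1) {s : ℝ}
    (hs : 0 ≤ s) (t : ℝ) : (#{v | t < |rademacherSum c v|} : ℝ)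
      ≤ 2 * (2 * exp (s ^ 2 / 2)) ^ Fintype.card ι / exp (s * t) := by
  have hmgf : ∀ s', |s'| ≤ s →
      ∑ v : ι → Bool, exp (rademacherSum (fun i => s' * c i) v)
        ≤ (2 * exp (s ^ 2 / 2)) ^ Fintype.card ι := by
    intro s' hs'
    refine (sum_exp_rademacherSum_le _).trans ?_
    rw [← card_univ, ← prod_const]
    refine prod_le_prod (fun i _ => by positivity) fun i _ => ?_
    have : |s' * c i| ≤ s := by
      rw [abs_mul]; nlinarith [hc i, abs_nonneg s', abs_nonneg (c i)]
    gcongr 2 * exp (?_ / 2)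
    simpa only [sq_abs] using pow_le_pow_left₀ (abs_nonneg _) this 2
  rw [le_div_iff₀ (exp_pos _)]
  refine (card_lt_abs_mul_exp_le _ hs t).trans ?_
  simp only [sum_add_distrib, ← neg_mul]
  simp only [← rademacherSum_const_mul]
  linarith [hmgf s (abs_of_nonneg hs).le, hmgf (-s) (by rw [abs_neg, abs_of_nonneg hs])]

end Rademacher

def prefixIndicator (n k : ℕ) : Fin n → ℝ := fun i => if (i : ℕ) < k then 1 else 0

def parityVector (n m : ℕ) : Fin n → Bool := fun i => parity m i = 1

lemma rademacherSum_prefixIndicator_parityVector {n k : ℕ} (hk : k ≤ n) (m : ℕ) :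
    rademacherSum (prefixIndicator n k) (parityVector n m) = 2 * oddCount m k - k := by
  have hsign : ∀ j, (if parity m j = 1 then (1 : ℝ) else -1) = 2 * parity m j - 1 := by
    intro j
    obtain hp | hp : parity m j = 0 ∨ parity m j = 1 := by have := parity_lt_two m j; omega
    all_goals norm_num [hp]
  have hrange : (range n).filter (· < k) = range k := by ext; simp; omega
  calc rademacherSum (prefixIndicator n k) (parityVector n m)
      = ∑ j ∈ range n, if j < k then 2 * (parity m j : ℝ) - 1 else 0 := by
        rw [← Fin.sum_univ_eq_sum_range
          (fun j => if j < k then 2 * (parity m j : ℝ) - 1 else 0)]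
        refine sum_congr rfl fun i _ => ?_
        simp only [prefixIndicator, parityVector, ← hsign, decide_eq_true_eq]
        split_ifs <;> norm_num
    _ = 2 * oddCount m k - k := by
        rw [← sum_filter, hrange, sum_sub_distrib, ← mul_sum]
        simp [oddCount]

lemma injOn_parityVector (n : ℕ) : Set.InjOn (parityVector n) (Ico (2 ^ n) (2 ^ (n + 1))) := by
  intro m hm m' hm' h
  simp only [coe_Ico, Set.mem_Ico, pow_succ] at hm hm'
  have hpar : ∀ j < n, parity m j = parity m' j := fun j hj => by
    have := congrFun h ⟨j, hj⟩
    simp only [parityVector, decide_eq_decide] at this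
    have := parity_lt_two m j
    have := parity_lt_two m' j
    omega
  have hmod : m - 2 ^ n ≡ m' - 2 ^ n [MOD 2 ^ n] := by
    refine Nat.ModEq.add_right_cancel' (2 ^ n) ?_
    rw [Nat.sub_add_cancel hm.1, Nat.sub_add_cancel hm'.1]
    exact modEq_of_parity_eq hpar
  have := hmod.eq_of_lt_of_lt (by omega) (by omega)
  omega

noncomputable def badParityVectors (δ : ℝ) (n : ℕ) : Finset (Fin n → Bool) :=
  (range (n + 1)).biUnion fun k => {v | δ * n - 1 < |rademacherSum (prefixIndicator n k) v|}

lemma add_one_le_exp_mul_div {δ : ℝ} (hδ0 : 0 < δ) (hδ1 : δ ≤ 1) (n : ℕ) :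
    (n + 1 : ℝ) ≤ exp (δ * n) / δ := by
  rw [le_div_iff₀ hδ0]
  nlinarith [add_one_le_exp (δ * n)]

lemma card_badParityVectors_le {δ : ℝ} (hδ0 : 0 < δ) (hδ1 : δ ≤ 1) (n : ℕ) :
    (#(badParityVectors δ n) : ℝ) ≤ 8 * exp δ / δ ^ 2 * (2 * exp (-(δ ^ 2 / 4))) ^ n := by
  have hprefix : ∀ k, (#{v | δ * n - 1 < |rademacherSum (prefixIndicator n k) v|} : ℝ)
      ≤ 2 * 2 ^ n * exp (δ - δ ^ 2 / 2 * n) := by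
    intro k
    refine (card_lt_abs_rademacherSum_le _ (fun i => ?_) hδ0.le _).trans_eq ?_
    · unfold prefixIndicator; split_ifs <;> norm_num
    · rw [Fintype.card_fin, mul_pow, ← exp_nat_mul, mul_assoc, mul_div_assoc, mul_div_assoc,
        ← exp_sub]
      ring_nf
  have hn := add_one_le_exp_mul_div (by positivity : 0 < δ ^ 2 / 4) (by nlinarith) n
  calc (#(badParityVectors δ n) : ℝ)
      ≤ ∑ k ∈ range (n + 1),
          (#{v | δ * n - 1 < |rademacherSum (prefixIndicator n k) v|} : ℝ) :=
        mod_cast card_biUnion_le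
    _ ≤ (n + 1) * (2 * 2 ^ n * exp (δ - δ ^ 2 / 2 * n)) := by
        refine (sum_le_sum fun k _ => hprefix k).trans_eq ?_
        rw [sum_const, card_range, nsmul_eq_mul]
        push_cast
        ring
    _ ≤ exp (δ ^ 2 / 4 * n) / (δ ^ 2 / 4) * (2 * 2 ^ n * exp (δ - δ ^ 2 / 2 * n)) := by
        gcongr
    _ = 8 * exp δ / δ ^ 2 * (2 * exp (-(δ ^ 2 / 4))) ^ n := by
        have e : exp (δ ^ 2 / 4 * n) * exp (δ - δ ^ 2 / 2 * n)
            = exp δ * exp (n * -(δ ^ 2 / 4)) := by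
          rw [← exp_add, ← exp_add]; ring_nf
        rw [mul_pow, ← exp_nat_mul]
        linear_combination (8 / δ ^ 2 * 2 ^ n) * e

lemma card_Icc_filter_le_sum_card_Ico_filter (p : ℕ → Prop) [DecidablePred p] (N : ℕ) :
    #{m ∈ Icc 1 N | p m}
      ≤ ∑ n ∈ range (Nat.log 2 N + 1), #{m ∈ Ico (2 ^ n) (2 ^ (n + 1)) | p m} := by
  refine (card_le_card fun m hm => ?_).trans card_biUnion_le
  obtain ⟨hm, hp⟩ := mem_filter.1 hm
  obtain ⟨hm1, hmN⟩ := mem_Icc.1 hm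
  refine mem_biUnion.2 ⟨Nat.log 2 m, ?_, mem_filter.2 ⟨mem_Ico.2 ?_, hp⟩⟩
  · exact mem_range.2 (Nat.lt_succ_of_le (Nat.log_mono_right hmN))
  · exact ⟨Nat.pow_log_le_self 2 (by omega), Nat.lt_pow_succ_log_self one_lt_two m⟩

lemma sum_range_pow_le {μ : ℝ} (hμ : 1 < μ) (L : ℕ) :
    ∑ n ∈ range (L + 1), μ ^ n ≤ μ / (μ - 1) * μ ^ L := by
  calc ∑ n ∈ range (L + 1), μ ^ n = (μ ^ (L + 1) - 1) / (μ - 1) := geom_sum_eq hμ.ne' _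
    _ ≤ μ ^ (L + 1) / (μ - 1) := by gcongr; linarith
    _ = μ / (μ - 1) * μ ^ L := by rw [pow_succ]; ring

lemma pow_le_rpow_logb {μ : ℝ} (hμ : 1 ≤ μ) {L N : ℕ} (hLN : 2 ^ L ≤ N) :
    μ ^ L ≤ (N : ℝ) ^ logb 2 μ := by
  calc μ ^ L = ((2 : ℝ) ^ L) ^ logb 2 μ := by
        rw [← rpow_pow_comm zero_le_two, rpow_logb two_pos (by norm_num) (by linarith)]
    _ ≤ (N : ℝ) ^ logb 2 μ := by
        gcongr
        · exact logb_nonneg one_lt_two hμ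
        · exact_mod_cast hLN

open scoped Classical in
lemma starDense_of_card_Ico_filter_notMem_le {S : Set ℕ} {K μ : ℝ} (hK : 0 < K)
    (hμ1 : 1 < μ) (hμ2 : μ < 2)
    (h : ∀ n, (#{m ∈ Ico (2 ^ n) (2 ^ (n + 1)) | m ∉ S} : ℝ) ≤ K * μ ^ n) :
    starDense S := by
  have hβ0 : 0 < logb 2 μ := logb_pos one_lt_two hμ1
  have hβ1 : logb 2 μ < 1 := by
    rwa [logb_lt_iff_lt_rpow one_lt_two (by linarith), rpow_one]
  have hC : 0 < K * μ / (μ - 1) := by have := sub_pos.2 hμ1; positivity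
  refine ⟨1 - logb 2 μ, by linarith, by linarith, K * μ / (μ - 1), hC, fun N hN => ?_⟩
  have hNR : (0 : ℝ) < N := by exact_mod_cast hN
  have hbad : (#{m ∈ Icc 1 N | m ∉ S} : ℝ) ≤ K * μ / (μ - 1) * (N : ℝ) ^ logb 2 μ :=
    calc (#{m ∈ Icc 1 N | m ∉ S} : ℝ) ≤ ∑ n ∈ range (Nat.log 2 N + 1), K * μ ^ n := by
          refine (Nat.cast_le.2 (card_Icc_filter_le_sum_card_Ico_filter _ N)).trans ?_
          push_cast
          exact sum_le_sum fun n _ => h n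
      _ ≤ K * (μ / (μ - 1) * μ ^ Nat.log 2 N) := by
          rw [← mul_sum]; gcongr; exact sum_range_pow_le hμ1 _
      _ ≤ K * μ / (μ - 1) * (N : ℝ) ^ logb 2 μ := by
          rw [mul_div_assoc, mul_assoc]
          gcongr
          exact pow_le_rpow_logb hμ1.le (Nat.pow_log_le_self 2 hN.ne')
  have hsplit : (countIn S N : ℝ) + #{m ∈ Icc 1 N | m ∉ S} = N := by
    have := card_filter_add_card_filter_not (s := Icc 1 N) (· ∈ S)
    rw [Nat.card_Icc, Nat.add_sub_cancel] at this
    exact_mod_cast this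
  rw [rpow_sub hNR, rpow_one, le_div_iff₀ hNR, div_div_eq_mul_div, sub_mul,
    div_mul_cancel₀ _ hNR.ne']
  linarith

def trackingSet (ε : ℝ) : Set ℕ :=
  {m : ℕ | ∀ k : ℕ, (k : ℝ) ≤ logb 2 m →
    (√3 / 2) ^ k * (m : ℝ) ^ (1 - ε) ≤ (T^[k] m : ℝ) ∧
    (T^[k] m : ℝ) ≤ (√3 / 2) ^ k * (m : ℝ) ^ (1 + ε)}

lemma log_iterate_T_bounds {m k : ℕ} (hm : 0 < m) (hk : 2 ^ k ≤ m) :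
    0 < T^[k] m ∧
    oddCount m k * log 3 + log m ≤ k * log 2 + log (T^[k] m) ∧
    k * log 2 + log (T^[k] m) ≤ oddCount m k * log 3 + log 2 + log m := by
  have hlow : (3 : ℝ) ^ oddCount m k * m ≤ 2 ^ k * T^[k] m := by
    exact_mod_cast three_pow_oddCount_mul_le m k
  have hup : (2 : ℝ) ^ k * T^[k] m ≤ 3 ^ oddCount m k * (2 * m) := by
    have h : (2 : ℝ) ^ k * T^[k] m + 2 ^ k ≤ 3 ^ oddCount m k * (m + 2 ^ k) := by
      exact_mod_cast two_pow_mul_iterate_add_two_pow_le m k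
    have hk' : (3 : ℝ) ^ oddCount m k * 2 ^ k ≤ 3 ^ oddCount m k * m :=
      mul_le_mul_of_nonneg_left (by exact_mod_cast hk) (by positivity)
    nlinarith [pow_pos (two_pos : (0 : ℝ) < 2) k]
  have hmR : (0 : ℝ) < m := by exact_mod_cast hm
  have hT : (0 : ℝ) < T^[k] m :=
    pos_of_mul_pos_right ((by positivity : (0 : ℝ) < _).trans_le hlow) (by positivity)
  refine ⟨by exact_mod_cast hT, ?_, ?_⟩
  · have := log_le_log (by positivity) hlow
    rwa [log_mul (by positivity) hmR.ne', log_mul (by positivity) hT.ne', log_pow, log_pow]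
      at this
  · have := log_le_log (by positivity) hup
    rwa [log_mul (by positivity) hT.ne', log_mul (by positivity) (by positivity),
      log_mul two_ne_zero hmR.ne', log_pow, log_pow, ← add_assoc] at this

lemma log_sqrt_three_div_two_pow_mul_rpow (k : ℕ) {x : ℝ} (hx : 0 < x) (p : ℝ) :
    log ((√3 / 2) ^ k * x ^ p) = k * (log 3 / 2 - log 2) + p * log x := by
  rw [log_mul (by positivity) (by positivity), log_pow, log_div (by positivity) two_ne_zero,
    log_sqrt zero_le_three, log_rpow hx]

lemma mem_trackingSet_of_abs_le {ε δ : ℝ} (hε : 0 ≤ ε) (hδε : δ ≤ ε) {n m : ℕ}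
    (hm₁ : 2 ^ n ≤ m) (hm₂ : m < 2 ^ (n + 1))
    (h : ∀ k ≤ n, |2 * (oddCount m k : ℝ) - k| ≤ δ * n - 1) :
    m ∈ trackingSet ε := by
  intro k hk
  have hm : 0 < m := lt_of_lt_of_le (by positivity) hm₁
  have hmR : (0 : ℝ) < m := by exact_mod_cast hm
  have hkm : 2 ^ k ≤ m := by
    rw [le_logb_iff_rpow_le one_lt_two hmR, rpow_natCast] at hk
    exact_mod_cast hk
  have hkn : k ≤ n :=
    Nat.lt_succ_iff.1 ((Nat.pow_lt_pow_iff_right one_lt_two).1 (hkm.trans_lt hm₂))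
  obtain ⟨hT, hlow, hup⟩ := log_iterate_T_bounds hm hkm
  have hTR : (0 : ℝ) < T^[k] m := by exact_mod_cast hT
  have hlog2 : 0 ≤ log 2 := log_nonneg one_le_two
  have hlog3 : log 3 ≤ 2 * log 2 := by
    rw [← log_rpow two_pos]; exact log_le_log three_pos (by norm_num)
  have hlogm : n * log 2 ≤ log m := by
    rw [← log_pow]; exact log_le_log (by positivity) (by exact_mod_cast hm₁)
  set e : ℝ := 2 * (oddCount m k : ℝ) - k
  -- `√3^|e| ≤ 2^|e|` together with `2^(|e|+1) ≤ 2^(δn) ≤ m^ε`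
  have key : |e| * log 3 / 2 + log 2 ≤ ε * log m :=
    calc |e| * log 3 / 2 + log 2 ≤ (|e| + 1) * log 2 := by nlinarith [abs_nonneg e]
      _ ≤ (δ * n) * log 2 := mul_le_mul_of_nonneg_right (by linarith [h k hkn]) hlog2
      _ ≤ (ε * n) * log 2 := by gcongr
      _ ≤ ε * log m := by rw [mul_assoc]; exact mul_le_mul_of_nonneg_left hlogm hε
  have hlog3_nonneg : 0 ≤ log 3 := log_nonneg (by norm_num)
  have h₁ := mul_le_mul_of_nonneg_right (neg_abs_le e) hlog3_nonneg
  have h₂ := mul_le_mul_of_nonneg_right (le_abs_self e) hlog3_nonneg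
  constructor
  · rw [← log_le_log_iff (by positivity) hTR, log_sqrt_three_div_two_pow_mul_rpow k hmR]
    linarith
  · rw [← log_le_log_iff hTR (by positivity), log_sqrt_three_div_two_pow_mul_rpow k hmR]
    linarith

lemma parityVector_mem_badParityVectors {ε δ : ℝ} (hε : 0 ≤ ε) (hδε : δ ≤ ε)
    {n m : ℕ} (hm : m ∈ Ico (2 ^ n) (2 ^ (n + 1))) (hS : m ∉ trackingSet ε) :
    parityVector n m ∈ badParityVectors δ n := by
  by_contra hbad
  obtain ⟨hm₁, hm₂⟩ := mem_Ico.1 hm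
  refine hS (mem_trackingSet_of_abs_le hε hδε hm₁ hm₂ fun k hk => ?_)
  simp only [badParityVectors, mem_biUnion, mem_range, mem_filter, mem_univ, true_and,
    not_exists, not_and, not_lt] at hbad
  rw [← rademacherSum_prefixIndicator_parityVector hk]
  exact hbad k (Nat.lt_succ_of_le hk)

theorem collatz_approx_initial_range (ε : ℝ) (hε : 0 < ε) :
    starDense {m : ℕ |
      ∀ k : ℕ, (k : ℝ) ≤ Real.logb 2 m →
        (Real.sqrt 3 / 2) ^ k * (m : ℝ) ^ (1 - ε) ≤ (T^[k] m : ℝ) ∧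
        (T^[k] m : ℝ) ≤ (Real.sqrt 3 / 2) ^ k * (m : ℝ) ^ (1 + ε)} := by
  classical
  set δ := min ε 1
  have hδ0 : 0 < δ := lt_min hε one_pos
  have hδ1 : δ ≤ 1 := min_le_right ε 1
  have hμ1 : 1 < 2 * exp (-(δ ^ 2 / 4)) := by
    nlinarith [add_one_le_exp (-(δ ^ 2 / 4))]
  have hμ2 : 2 * exp (-(δ ^ 2 / 4)) < 2 := by
    have : exp (-(δ ^ 2 / 4)) < 1 := exp_lt_one_iff.2 (by nlinarith)
    linarith
  refine starDense_of_card_Ico_filter_notMem_le (S := trackingSet ε)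
    (K := 8 * exp δ / δ ^ 2) (by positivity) hμ1 hμ2 fun n => ?_
  calc (#{m ∈ Ico (2 ^ n) (2 ^ (n + 1)) | m ∉ trackingSet ε} : ℝ)
      ≤ #(badParityVectors δ n) := by
        refine Nat.cast_le.2 (card_le_card_of_injOn _ (fun m hm => ?_)
          ((injOn_parityVector n).mono (filter_subset _ _)))
        obtain ⟨hm, hS⟩ := mem_filter.1 hm
        exact parityVector_mem_badParityVectors hε.le (min_le_left ε 1) hm hS
    _ ≤ _ := card_badParityVectors_le hδ0 hδ1 n
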